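/- Assume zero no-shows and constant idle time costs. With ASAP appointment times $A_1 = 0$, $A_i = (\sum_{k=1}^{i-1}\sum_j \pi_{kj}\bar{p}_j - \sum_j \pi_{ij}W_j)^+$, for any $i^* \in [n]$ with $A_{i^*} > 0$ and nonnegative overtime, the sequence-dependent part of the worst-case cost associated with scenario index $i^*$ equals $\sum_{k=1}^{i^*-1}\sum_j \pi_{kj}(\bar{p}_j - \ubar{p}_j) - (1 + c_o)\sum_j \pi_{i^*j} W_j$ (up to sequence-independent additive terms). -/
import Mathlib


/-- ASAP appointment times for sequence `σ` (zero no-shows, guarantees `W`). -/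
noncomputable def asapA16 (hi W : ℕ → ℝ) (σ : ℕ → ℕ) (i : ℕ) : ℝ :=
  max ((∑ k ∈ Finset.Icc 1 (i - 1), hi (σ k)) - W (σ i)) 0

/-- Completion times under minimum service times for sequence `σ` and ASAP times. -/
noncomputable def ubC16 (lo hi W : ℕ → ℝ) (σ : ℕ → ℕ) : ℕ → ℝ
  | 0 => 0
  | i + 1 => max (asapA16 hi W σ (i + 1)) (ubC16 lo hi W σ i) + lo (σ (i + 1))

lemma idle_sum_lemma (lo hi W : ℕ → ℝ) (σ : ℕ → ℕ) :
    ∀ m, (∑ i ∈ Finset.Icc 1 m,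
        max (asapA16 hi W σ i - ubC16 lo hi W σ (i - 1)) 0) =
      ubC16 lo hi W σ m - ∑ k ∈ Finset.Icc 1 m, lo (σ k) := by
  intro m
  induction m with
  | zero => simp [ubC16]
  | succ m ih =>
      rw [Finset.sum_Icc_succ_top (by omega : 1 ≤ m + 1),
          Finset.sum_Icc_succ_top (by omega : 1 ≤ m + 1), ih]
      have : max (asapA16 hi W σ (m + 1) - ubC16 lo hi W σ (m + 1 - 1)) 0
          = max (asapA16 hi W σ (m + 1)) (ubC16 lo hi W σ m)
            - ubC16 lo hi W σ m := by
        simp only [Nat.add_sub_cancel]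
        rw [← max_sub_sub_right, sub_self]
      rw [this]
      show _ = max (asapA16 hi W σ (m + 1)) (ubC16 lo hi W σ m) + lo (σ (m + 1)) - _
      ring

theorem scenario_cost_sequence_dependent_part'
    (n : ℕ) (σ : ℕ → ℕ)
    (lo hi W : ℕ → ℝ) (co L : ℝ)
    (istar : ℕ) (h1 : 1 ≤ istar) (h2 : istar ≤ n)
    (hpos : 0 < asapA16 hi W σ istar)
    (hidle : 0 < asapA16 hi W σ istar - ubC16 lo hi W σ (istar - 1)) :
    (∑ i ∈ Finset.Icc 1 istar,
        max (asapA16 hi W σ i - ubC16 lo hi W σ (i - 1)) 0) +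
      co * (asapA16 hi W σ istar + (∑ k ∈ Finset.Icc istar n, hi (σ k)) - L) =
    (∑ k ∈ Finset.Icc 1 (istar - 1), (hi (σ k) - lo (σ k))) -
      (1 + co) * W (σ istar) +
      co * ((∑ k ∈ Finset.Icc 1 n, hi (σ k)) - L) := by
  obtain ⟨m, rfl⟩ : ∃ m, istar = m + 1 := ⟨istar - 1, by omega⟩
  simp only [Nat.add_sub_cancel] at *
  -- split the sum at istar
  rw [Finset.sum_Icc_succ_top (by omega : 1 ≤ m + 1),
      idle_sum_lemma lo hi W σ m]
  have hmax : max (asapA16 hi W σ (m + 1) - ubC16 lo hi W σ (m + 1 - 1)) 0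
      = asapA16 hi W σ (m + 1) - ubC16 lo hi W σ m := by
    simp only [Nat.add_sub_cancel]
    exact max_eq_left hidle.le
  rw [hmax]
  -- value of A at istar
  have hA : asapA16 hi W σ (m + 1)
      = (∑ k ∈ Finset.Icc 1 m, hi (σ k)) - W (σ (m + 1)) := by
    unfold asapA16 at hpos ⊢
    simp only [Nat.add_sub_cancel] at hpos ⊢
    rcases le_or_gt ((∑ k ∈ Finset.Icc 1 m, hi (σ k)) - W (σ (m + 1))) 0 with h | h
    · rw [max_eq_right h] at hpos; linarith
    · exact max_eq_left h.le
  -- split ∑_{1..n} hi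
  have hsplit : (∑ k ∈ Finset.Icc 1 m, hi (σ k)) +
      (∑ k ∈ Finset.Icc (m + 1) n, hi (σ k)) = ∑ k ∈ Finset.Icc 1 n, hi (σ k) := by
    rw [show Finset.Icc 1 m = Finset.Ioc 0 m from (Finset.Icc_add_one_left_eq_Ioc 0 m).symm,
        show Finset.Icc (m + 1) n = Finset.Ioc m n by rw [Finset.Icc_add_one_left_eq_Ioc],
        show Finset.Icc 1 n = Finset.Ioc 0 n from (Finset.Icc_add_one_left_eq_Ioc 0 n).symm]
    exact Finset.sum_Ioc_consecutive _ (Nat.zero_le m) (by omega)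
  rw [Finset.sum_sub_distrib, hA]
  linear_combination co * hsplit

/-- with zero no-shows, constant unit idle costs and ASAP times,
for a scenario index `i*` with `A_{i*} > 0`, positive idle time before `i*`, and
nonnegative overtime, the worst-case cost of scenario `i*` equals
`∑_{k<i*}(p̄_k - p̲_k) - (1+c_o) W_{i*}` plus the sequence-independent term
`c_o (∑_{k=1}^n p̄_k - L)`. -/
theorem scenario_cost_sequence_dependent_part
    (n : ℕ) (σ : ℕ → ℕ) (hbij : Set.BijOn σ (Set.Icc 1 n) (Set.Icc 1 n))
    (lo hi W : ℕ → ℝ) (co L : ℝ)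
    (hlo : ∀ j, 0 ≤ lo j) (hlohi : ∀ j, lo j ≤ hi j) (hW : ∀ j, 0 ≤ W j)
    (hco : 0 ≤ co)
    (istar : ℕ) (h1 : 1 ≤ istar) (h2 : istar ≤ n)
    (hpos : 0 < asapA16 hi W σ istar)
    (hidle : 0 < asapA16 hi W σ istar - ubC16 lo hi W σ (istar - 1))
    (hover : L ≤ asapA16 hi W σ istar + ∑ k ∈ Finset.Icc istar n, hi (σ k)) :
    (∑ i ∈ Finset.Icc 1 istar,
        max (asapA16 hi W σ i - ubC16 lo hi W σ (i - 1)) 0) +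
      co * (asapA16 hi W σ istar + (∑ k ∈ Finset.Icc istar n, hi (σ k)) - L) =
    (∑ k ∈ Finset.Icc 1 (istar - 1), (hi (σ k) - lo (σ k))) -
      (1 + co) * W (σ istar) +
      co * ((∑ k ∈ Finset.Icc 1 n, hi (σ k)) - L) := by
  exact scenario_cost_sequence_dependent_part' n σ lo hi W co L istar h1 h2 hpos hidle
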